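/- arXiv:1510.05826 — 2 statements merged into one kernel-verified Lean document; each statement's English description precedes it below -/
import Mathlib

section
/- For normal distributions P₁ = N(μ₁, σ₁²) and P₂ = N(μ₂, σ₂²) with σ₂ ≤ σ₁, d_W(P₁,P₂) ≤ |(σ₁²/σ₂²) μ₂ − μ₁| + ((σ₁²/σ₂²) − 1) √(σ₂² + μ₂²). -/
/-!
Couple `X ∼ N(μ₂, σ₂²)` with `a X + b ∼ N(μ₁, σ₁²)`, where `a = σ₁ / σ₂ ≥ 1` and `b = μ₁ - a μ₂`.
For a `1`-Lipschitz `h` this gives `|E h(X) - E h(a X + b)| ≤ E |(1 - a) X - b| ≤ (a - 1) E|X| + |b|`,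
and the claim follows from `E|X| ≤ √(σ₂² + μ₂²)` and `|b| ≤ |a² μ₂ - μ₁| + (a² - a) |μ₂|`.
-/

open MeasureTheory ProbabilityTheory

open scoped NNReal

section Coupling

variable {Ω E F : Type*} [MeasurableSpace Ω] {P : Measure Ω} [IsFiniteMeasure P]
  [NormedAddCommGroup E] [NormedAddCommGroup F] {K : ℝ≥0} {h : E → F}

lemma LipschitzWith.integrable_comp (hh : LipschitzWith K h) {f : Ω → E} (hf : Integrable f P) :
    Integrable (fun ω ↦ h (f ω)) P := by
  refine ((integrable_const ‖h 0‖).add (hf.norm.const_mul K)).mono'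
    (hh.continuous.comp_aestronglyMeasurable hf.1) (.of_forall fun ω ↦ ?_)
  calc ‖h (f ω)‖ ≤ ‖h 0‖ + ‖h (f ω) - h 0‖ := norm_le_insert' _ _
    _ ≤ ‖h 0‖ + K * ‖f ω‖ := by gcongr; simpa using hh.norm_sub_le (f ω) 0

lemma LipschitzWith.norm_integral_comp_sub_le [NormedSpace ℝ F] (hh : LipschitzWith K h)
    {f g : Ω → E} (hf : Integrable f P) (hg : Integrable g P) :
    ‖∫ ω, h (f ω) ∂P - ∫ ω, h (g ω) ∂P‖ ≤ K * ∫ ω, ‖f ω - g ω‖ ∂P := by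
  rw [← integral_sub (hh.integrable_comp hf) (hh.integrable_comp hg), ← integral_const_mul]
  exact norm_integral_le_of_norm_le ((hf.sub hg).norm.const_mul _)
    (.of_forall fun ω ↦ hh.norm_sub_le _ _)

end Coupling

lemma integral_abs_le_sqrt_integral_sq {Ω : Type*} [MeasurableSpace Ω] {P : Measure Ω}
    [IsProbabilityMeasure P] {X : Ω → ℝ} (hX : MemLp X 2 P) :
    ∫ ω, |X ω| ∂P ≤ √(∫ ω, X ω ^ 2 ∂P) := by
  have hvar := variance_eq_sub hX.abs
  have hnonneg := variance_nonneg |X| P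
  simp only [Pi.pow_apply, Pi.abs_apply, sq_abs] at hvar
  exact Real.le_sqrt_of_sq_le (by linarith)

section Gaussian

variable {μ : ℝ} {v : ℝ≥0}

lemma integral_sq_gaussianReal : ∫ x, x ^ 2 ∂gaussianReal μ v = v + μ ^ 2 := by
  have h := variance_eq_sub (memLp_id_gaussianReal (μ := μ) (v := v) 2)
  simp only [Pi.pow_apply, id_eq] at h
  rw [variance_id_gaussianReal, integral_id_gaussianReal] at h
  linarith

lemma gaussianReal_map_const_mul_add_const (a b : ℝ) :
    (gaussianReal μ v).map (fun x ↦ a * x + b) =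
      gaussianReal (a * μ + b) ((a ^ 2).toNNReal * v) := by
  change (gaussianReal μ v).map ((· + b) ∘ (a * ·)) = _
  rw [← Measure.map_map (measurable_add_const b) (measurable_const_mul a),
    gaussianReal_map_const_mul, gaussianReal_map_add_const, Real.toNNReal_of_nonneg (sq_nonneg a)]

lemma integral_abs_gaussianReal_le : ∫ x, |x| ∂gaussianReal μ v ≤ √(v + μ ^ 2) := by
  simpa only [id_eq, integral_sq_gaussianReal] using
    integral_abs_le_sqrt_integral_sq (memLp_id_gaussianReal (μ := μ) (v := v) 2)

end Gaussian

lemma abs_integral_sub_integral_map_affine_le {P : Measure ℝ} [IsProbabilityMeasure P]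
    (hP : Integrable (fun x ↦ x) P) {h : ℝ → ℝ} (hh : LipschitzWith 1 h) (a b : ℝ) :
    |∫ x, h x ∂P - ∫ x, h x ∂P.map (fun x ↦ a * x + b)| ≤ |a - 1| * ∫ x, |x| ∂P + |b| := by
  have hshift : ∀ x : ℝ, ‖x - (a * x + b)‖ ≤ |a - 1| * |x| + |b| := fun x ↦ calc
    ‖x - (a * x + b)‖ = |(1 - a) * x - b| := by rw [Real.norm_eq_abs]; ring_nf
    _ ≤ |1 - a| * |x| + |b| := by rw [← abs_mul]; exact abs_sub _ _
    _ = |a - 1| * |x| + |b| := by rw [abs_sub_comm]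
  rw [integral_map (by fun_prop) hh.continuous.aestronglyMeasurable]
  calc _ ≤ 1 * ∫ x, ‖x - (a * x + b)‖ ∂P :=
        hh.norm_integral_comp_sub_le hP ((hP.const_mul a).add (integrable_const b))
    _ ≤ ∫ x, (|a - 1| * |x| + |b|) ∂P := by
        rw [one_mul]
        exact integral_mono (hP.sub ((hP.const_mul a).add (integrable_const b))).norm
          ((hP.abs.const_mul _).add (integrable_const _)) hshift
    _ = |a - 1| * ∫ x, |x| ∂P + |b| := by
        rw [integral_add (hP.abs.const_mul _) (integrable_const _), integral_const_mul,
          integral_const, probReal_univ, one_smul]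

/-- For normals `N(μ₁,σ₁²)` and `N(μ₂,σ₂²)` with `σ₂ ≤ σ₁`,
`d_W(P₁,P₂) ≤ |(σ₁²/σ₂²) μ₂ − μ₁| + ((σ₁²/σ₂²) − 1) √(σ₂² + μ₂²)`. -/
theorem wasserstein_gaussians_le
    (μ₁ μ₂ σ₁ σ₂ : ℝ) (hσ₂ : 0 < σ₂) (hle : σ₂ ≤ σ₁)
    (W : ℝ)
    (hW : IsLUB {d : ℝ | ∃ h : ℝ → ℝ, LipschitzWith 1 h ∧
        d = |(∫ x, h x ∂(gaussianReal μ₂ (σ₂ ^ 2).toNNReal))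
             - ∫ x, h x ∂(gaussianReal μ₁ (σ₁ ^ 2).toNNReal)|} W) :
    W ≤ |σ₁ ^ 2 / σ₂ ^ 2 * μ₂ - μ₁|
        + (σ₁ ^ 2 / σ₂ ^ 2 - 1) * Real.sqrt (σ₂ ^ 2 + μ₂ ^ 2) := by
  set a := σ₁ / σ₂ with ha
  set c := √(σ₂ ^ 2 + μ₂ ^ 2)
  have ha1 : 1 ≤ a := (one_le_div hσ₂).2 hle
  have ha2 : 0 ≤ a ^ 2 - a := by nlinarith
  have hlaw : (gaussianReal μ₂ (σ₂ ^ 2).toNNReal).map (fun x ↦ a * x + (μ₁ - a * μ₂)) =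
      gaussianReal μ₁ (σ₁ ^ 2).toNNReal := by
    rw [gaussianReal_map_const_mul_add_const, ← Real.toNNReal_mul (sq_nonneg a),
      show a * μ₂ + (μ₁ - a * μ₂) = μ₁ by ring, show a ^ 2 * σ₂ ^ 2 = σ₁ ^ 2 by rw [ha]; field_simp]
  have hmoment : ∫ x, |x| ∂gaussianReal μ₂ (σ₂ ^ 2).toNNReal ≤ c := by
    have := integral_abs_gaussianReal_le (μ := μ₂) (v := (σ₂ ^ 2).toNNReal)
    rwa [Real.coe_toNNReal _ (sq_nonneg σ₂)] at this
  have hshift : |μ₁ - a * μ₂| ≤ |a ^ 2 * μ₂ - μ₁| + (a ^ 2 - a) * c := calc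
    |μ₁ - a * μ₂| ≤ |μ₁ - a ^ 2 * μ₂| + |a ^ 2 * μ₂ - a * μ₂| := abs_sub_le _ _ _
    _ = |a ^ 2 * μ₂ - μ₁| + (a ^ 2 - a) * |μ₂| := by
      rw [abs_sub_comm μ₁, ← sub_mul, abs_mul, abs_of_nonneg ha2]
    _ ≤ |a ^ 2 * μ₂ - μ₁| + (a ^ 2 - a) * c := by
      gcongr
      exact Real.abs_le_sqrt (by nlinarith)
  refine hW.2 ?_
  rintro _ ⟨h, hh, rfl⟩
  rw [← hlaw, ← div_pow, ← ha]
  calc _ ≤ |a - 1| * ∫ x, |x| ∂gaussianReal μ₂ (σ₂ ^ 2).toNNReal + |μ₁ - a * μ₂| :=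
        abs_integral_sub_integral_map_affine_le
          ((memLp_id_gaussianReal 1).integrable le_rfl) hh a (μ₁ - a * μ₂)
    _ ≤ (a - 1) * c + (|a ^ 2 * μ₂ - μ₁| + (a ^ 2 - a) * c) := by
        rw [abs_of_nonneg (by linarith : 0 ≤ a - 1)]
        gcongr
    _ = |a ^ 2 * μ₂ - μ₁| + (a ^ 2 - 1) * c := by ring
end

section
/- Let P₁ = Gamma(k, λ) and let P₂ be its exponential tilt with density p₂(x) = p₁(x) e^{λ₁ x}/M₁(λ₁), where λ₁ = 1/λ − k/μ₂ < 1/λ and M₁(t) = (1−λt)^{−k} is the moment generating function, so that P₂ = Gamma(k, μ₂/k) has mean μ₂. Then d_W(P₁, P₂) = |μ₂ − λk|. -/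
/-!
The tilt of `Gamma(k, λ)` by `e^{λ₁ x}` is `Gamma(k, μ₂ / k)`, which is the image of
`Gamma(k, λ)` under the dilation `x ↦ c x` with `c = μ₂ / (λ k)`. Coupling `X` with `c X`,
every `1`-Lipschitz `h` satisfies `|E h(c X) - E h(X)| ≤ |c - 1| E |X|`, and since `X ≥ 0`
the test function `h = id` attains this bound. Hence the distance is the difference of the
means, `|μ₂ - λ k|`.
-/

open MeasureTheory Set
open scoped ENNReal

lemma LipschitzWith.integrable_comp_s11 {α E F : Type*} [MeasurableSpace α] {μ : Measure α}
    [IsFiniteMeasure μ] [NormedAddCommGroup E] [NormedAddCommGroup F] {K : NNReal} {g : E → F}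
    (hg : LipschitzWith K g) {f : α → E} (hf : Integrable f μ) : Integrable (g ∘ f) μ := by
  refine ((integrable_const ‖g 0‖).add (hf.norm.const_mul K)).mono'
    (hg.continuous.comp_aestronglyMeasurable hf.1) (ae_of_all _ fun x => ?_)
  have hle := hg.norm_sub_le (f x) 0
  rw [sub_zero] at hle
  simp only [Function.comp_apply, Pi.add_apply]
  linarith [norm_le_insert' (g (f x)) (g 0)]

lemma map_const_mul_withDensity {c : ℝ} (hc : c ≠ 0) {f g : ℝ → ℝ≥0∞} (hg : Measurable g)
    (hfg : ∀ x, f x = ENNReal.ofReal |c| * g (c * x)) :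
    (volume.withDensity f).map (c * ·) = volume.withDensity g := by
  ext s hs
  rw [Measure.map_apply (measurable_const_mul c) hs,
    withDensity_apply _ (measurable_const_mul c hs), withDensity_apply _ hs]
  have hgc : Measurable fun x => g (c * x) := hg.comp (measurable_const_mul c)
  simp_rw [hfg]
  rw [lintegral_const_mul _ hgc,
    ← setLIntegral_map hs hg (measurable_const_mul c), Real.map_volume_mul_left hc,
    Measure.restrict_smul, lintegral_smul_measure, smul_eq_mul, ← mul_assoc,
    ← ENNReal.ofReal_mul (abs_nonneg c), abs_inv, mul_inv_cancel₀ (abs_ne_zero.2 hc),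
    ENNReal.ofReal_one, one_mul]

section Dilation

variable {μ : Measure ℝ} [IsFiniteMeasure μ]

lemma abs_integral_comp_mul_sub_le (hμ : Integrable id μ) {K : NNReal} {h : ℝ → ℝ}
    (hh : LipschitzWith K h) (c : ℝ) :
    |∫ x, h (c * x) ∂μ - ∫ x, h x ∂μ| ≤ K * |c - 1| * ∫ x, |x| ∂μ := by
  have hint : ∀ a : ℝ, Integrable (fun x => h (a * x)) μ :=
    fun a => hh.integrable_comp_s11 (hμ.const_mul a)
  rw [← integral_sub (hint c) (by simpa using hint 1), ← integral_const_mul ((K : ℝ) * |c - 1|),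
    ← Real.norm_eq_abs]
  refine norm_integral_le_of_norm_le (hμ.abs.const_mul _) (ae_of_all _ fun x => ?_)
  calc ‖h (c * x) - h x‖ ≤ K * ‖c * x - x‖ := hh.norm_sub_le _ _
    _ = K * |c - 1| * |x| := by rw [Real.norm_eq_abs, ← sub_one_mul, abs_mul, mul_assoc]

theorem isLUB_lipschitz_map_const_mul (hμ : Integrable id μ) (hpos : ∀ᵐ x ∂μ, 0 ≤ x) (c : ℝ) :
    IsLUB {d : ℝ | ∃ h : ℝ → ℝ, LipschitzWith 1 h ∧
        d = |(∫ x, h x ∂μ.map (c * ·)) - ∫ x, h x ∂μ|}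
      |(∫ x, x ∂μ.map (c * ·)) - ∫ x, x ∂μ| := by
  have hmap : ∀ h : ℝ → ℝ, Continuous h → ∫ x, h x ∂μ.map (c * ·) = ∫ x, h (c * x) ∂μ :=
    fun h hh => integral_map (measurable_const_mul c).aemeasurable hh.aestronglyMeasurable
  have habs : ∫ x, |x| ∂μ = ∫ x, x ∂μ :=
    integral_congr_ae (hpos.mono fun x hx => abs_of_nonneg hx)
  have hmean : |(∫ x, x ∂μ.map (c * ·)) - ∫ x, x ∂μ| = |c - 1| * ∫ x, |x| ∂μ := by
    rw [hmap (fun x => x) continuous_id, integral_const_mul, ← sub_one_mul, abs_mul, habs,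
      abs_of_nonneg (integral_nonneg_of_ae hpos)]
  refine ⟨?_, fun b hb => hb ⟨id, LipschitzWith.id, rfl⟩⟩
  rintro _ ⟨h, hh, rfl⟩
  rw [hmap h hh.continuous, hmean]
  simpa using abs_integral_comp_mul_sub_le hμ hh c

end Dilation

noncomputable def gammaDensity (k θ x : ℝ) : ℝ :=
  if 0 < x then (Real.Gamma k)⁻¹ * (θ ^ k)⁻¹ * x ^ (k - 1) * Real.exp (-x / θ) else 0

section GammaDensity

variable {k θ : ℝ}

lemma gammaDensity_of_nonpos {x : ℝ} (hx : x ≤ 0) : gammaDensity k θ x = 0 :=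
  if_neg hx.not_gt

lemma gammaDensity_nonneg (hk : 0 < k) (hθ : 0 < θ) (x : ℝ) : 0 ≤ gammaDensity k θ x := by
  unfold gammaDensity
  split_ifs
  · have := Real.Gamma_pos_of_pos hk
    positivity
  · rfl

lemma measurable_gammaDensity : Measurable (gammaDensity k θ) :=
  Measurable.ite measurableSet_Ioi (by fun_prop) measurable_const

lemma integral_gammaDensity (hk : 0 < k) (hθ : 0 < θ) : ∫ x, gammaDensity k θ x = 1 := by
  have hind : gammaDensity k θ = (Ioi 0).indicator
      fun x => ((Real.Gamma k)⁻¹ * (θ ^ k)⁻¹) * (x ^ (k - 1) * Real.exp (-(θ⁻¹ * x))) := by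
    ext x
    simp only [gammaDensity, indicator, mem_Ioi, div_eq_inv_mul, mul_neg, mul_assoc]
  rw [hind, integral_indicator measurableSet_Ioi, integral_const_mul,
    Real.integral_rpow_mul_exp_neg_mul_Ioi hk (inv_pos.2 hθ), one_div, inv_inv]
  have := (Real.Gamma_pos_of_pos hk).ne'
  have := (Real.rpow_pos_of_pos hθ k).ne'
  field_simp

lemma integrable_gammaDensity (hk : 0 < k) (hθ : 0 < θ) : Integrable (gammaDensity k θ) :=
  Integrable.of_integral_ne_zero (by rw [integral_gammaDensity hk hθ]; exact one_ne_zero)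

lemma mul_gammaDensity (hk : 0 < k) (hθ : 0 < θ) (x : ℝ) :
    x * gammaDensity k θ x = θ * k * gammaDensity (k + 1) θ x := by
  rcases le_or_gt x 0 with hx | hx
  · simp [gammaDensity_of_nonpos hx]
  simp only [gammaDensity, if_pos hx, add_sub_cancel_right, Real.Gamma_add_one hk.ne',
    Real.rpow_add_one hθ.ne', Real.rpow_sub_one hx.ne']
  have := (Real.Gamma_pos_of_pos hk).ne'
  have := (Real.rpow_pos_of_pos hθ k).ne'
  have := (Real.rpow_pos_of_pos hx k).ne'
  field_simp

lemma mul_gammaDensity_mul_mul (hθ : 0 < θ) {c : ℝ} (hc : 0 < c) (x : ℝ) :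
    c * gammaDensity k (c * θ) (c * x) = gammaDensity k θ x := by
  rcases le_or_gt x 0 with hx | hx
  · simp [gammaDensity_of_nonpos hx,
      gammaDensity_of_nonpos (mul_nonpos_of_nonneg_of_nonpos hc.le hx)]
  simp only [gammaDensity, if_pos hx, if_pos (mul_pos hc hx), Real.mul_rpow hc.le hθ.le,
    Real.mul_rpow hc.le hx.le, Real.rpow_sub_one hc.ne']
  have := (Real.rpow_pos_of_pos hc k).ne'
  have := (Real.rpow_pos_of_pos hθ k).ne'
  field_simp

/-- `(1 - θ t) ^ (-k)` is the moment generating function of `Gamma(k, θ)` at `t`. -/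
lemma gammaDensity_mul_exp_div_mgf (hθ : 0 < θ) {t : ℝ} (ht : θ * t < 1) (x : ℝ) :
    gammaDensity k θ x * Real.exp (t * x) / (1 - θ * t) ^ (-k)
      = gammaDensity k (θ / (1 - θ * t)) x := by
  have hs : 0 < 1 - θ * t := by linarith
  rcases le_or_gt x 0 with hx | hx
  · simp [gammaDensity_of_nonpos hx]
  have hexp : Real.exp (-x / θ) * Real.exp (t * x) = Real.exp (-x / (θ / (1 - θ * t))) := by
    rw [← Real.exp_add]
    congr 1
    field_simp
    ring
  simp only [gammaDensity, if_pos hx, Real.div_rpow hθ.le hs.le, Real.rpow_neg hs.le, ← hexp]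
  have := (Real.rpow_pos_of_pos hs k).ne'
  field_simp

end GammaDensity

noncomputable def gammaScaleMeasure (k θ : ℝ) : Measure ℝ :=
  volume.withDensity fun x => ENNReal.ofReal (gammaDensity k θ x)

section GammaScaleMeasure

variable {k θ : ℝ}

lemma isFiniteMeasure_gammaScaleMeasure (hk : 0 < k) (hθ : 0 < θ) :
    IsFiniteMeasure (gammaScaleMeasure k θ) :=
  isFiniteMeasure_withDensity_ofReal (integrable_gammaDensity hk hθ).2

lemma integral_gammaScaleMeasure (hk : 0 < k) (hθ : 0 < θ) (g : ℝ → ℝ) :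
    ∫ x, g x ∂gammaScaleMeasure k θ = ∫ x, gammaDensity k θ x * g x := by
  rw [gammaScaleMeasure, integral_withDensity_eq_integral_toReal_smul
    measurable_gammaDensity.ennreal_ofReal (ae_of_all _ fun _ => ENNReal.ofReal_lt_top)]
  simp only [ENNReal.toReal_ofReal (gammaDensity_nonneg hk hθ _), smul_eq_mul]

lemma integrable_id_gammaScaleMeasure (hk : 0 < k) (hθ : 0 < θ) :
    Integrable id (gammaScaleMeasure k θ) := by
  rw [gammaScaleMeasure, integrable_withDensity_iff_integrable_smul'
    measurable_gammaDensity.ennreal_ofReal (ae_of_all _ fun _ => ENNReal.ofReal_lt_top)]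
  simp only [ENNReal.toReal_ofReal (gammaDensity_nonneg hk hθ _), smul_eq_mul, id,
    mul_comm _ (_ : ℝ), mul_gammaDensity hk hθ]
  exact (integrable_gammaDensity (by linarith) hθ).const_mul _

lemma integral_id_gammaScaleMeasure (hk : 0 < k) (hθ : 0 < θ) :
    ∫ x, x ∂gammaScaleMeasure k θ = θ * k := by
  simp only [integral_gammaScaleMeasure hk hθ, mul_comm (gammaDensity k θ _),
    mul_gammaDensity hk hθ, integral_const_mul,
    integral_gammaDensity (by linarith : 0 < k + 1) hθ, mul_one]

lemma ae_nonneg_gammaScaleMeasure : ∀ᵐ x ∂gammaScaleMeasure k θ, 0 ≤ x :=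
  (ae_withDensity_iff measurable_gammaDensity.ennreal_ofReal).2 <| ae_of_all _ fun x hx => by
    by_contra! hneg
    exact hx (by rw [gammaDensity_of_nonpos hneg.le, ENNReal.ofReal_zero])

lemma map_const_mul_gammaScaleMeasure (hθ : 0 < θ) {c : ℝ} (hc : 0 < c) :
    (gammaScaleMeasure k θ).map (c * ·) = gammaScaleMeasure k (c * θ) :=
  map_const_mul_withDensity hc.ne' measurable_gammaDensity.ennreal_ofReal fun x => by
    rw [← ENNReal.ofReal_mul (abs_nonneg c), abs_of_pos hc, mul_gammaDensity_mul_mul hθ hc]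

end GammaScaleMeasure

/-- The Wasserstein distance between `Gamma(k,λ)` and its exponential tilt with
mean `μ₂` (so that `P₂ = Gamma(k, μ₂/k)`) equals `|μ₂ − λk|`. -/
theorem wasserstein_tilted_gamma
    (k lam μ₂ : ℝ) (hk : 0 < k) (hlam : 0 < lam) (hμ₂ : 0 < μ₂)
    (p₁ : ℝ → ℝ)
    (hp₁ : p₁ = fun x => if 0 < x then
        (Real.Gamma k)⁻¹ * (lam ^ k)⁻¹ * x ^ (k - 1) * Real.exp (-x / lam) else 0)
    (lam₁ : ℝ) (hlam₁ : lam₁ = 1 / lam - k / μ₂)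
    (M₁ : ℝ) (hM₁ : M₁ = (1 - lam * lam₁) ^ (-k))
    (p₂ : ℝ → ℝ) (hp₂ : p₂ = fun x => p₁ x * Real.exp (lam₁ * x) / M₁)
    (P₁ P₂ : Measure ℝ)
    (hP₁ : P₁ = volume.withDensity (fun x => ENNReal.ofReal (p₁ x)))
    (hP₂ : P₂ = volume.withDensity (fun x => ENNReal.ofReal (p₂ x)))
    (W : ℝ)
    (hW : IsLUB {d : ℝ | ∃ h : ℝ → ℝ, LipschitzWith 1 h ∧
        d = |(∫ x, h x ∂P₂) - ∫ x, h x ∂P₁|} W) :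
    W = |μ₂ - lam * k| := by
  subst hp₁
  have hθ₂ : 0 < μ₂ / k := div_pos hμ₂ hk
  have hgap : 1 - lam * lam₁ = lam * k / μ₂ := by
    rw [hlam₁]
    field_simp
    ring
  have hscale : lam / (1 - lam * lam₁) = μ₂ / k := by
    rw [hgap]
    field_simp
  have hP₁' : P₁ = gammaScaleMeasure k lam := hP₁
  have htilt : P₂ = gammaScaleMeasure k (μ₂ / k) := by
    have hlt : lam * lam₁ < 1 := by
      have : 0 < lam * k / μ₂ := by positivity
      linarith
    rw [hP₂, hp₂, hM₁, gammaScaleMeasure, ← hscale]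
    simp_rw [← gammaDensity_mul_exp_div_mgf hlam hlt]
    rfl
  have hdil : P₂ = P₁.map ((μ₂ / k / lam) * ·) := by
    rw [hP₁', map_const_mul_gammaScaleMeasure hlam (div_pos hθ₂ hlam),
      div_mul_cancel₀ _ hlam.ne', htilt]
  have := isFiniteMeasure_gammaScaleMeasure hk hlam
  have hLUB := isLUB_lipschitz_map_const_mul (integrable_id_gammaScaleMeasure hk hlam)
    ae_nonneg_gammaScaleMeasure (μ₂ / k / lam)
  rw [← hP₁', ← hdil] at hLUB
  rw [hW.unique hLUB, htilt, hP₁', integral_id_gammaScaleMeasure hk hθ₂,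
    integral_id_gammaScaleMeasure hk hlam, div_mul_cancel₀ _ hk.ne']
end
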